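/- arXiv:1410.1152 — 2 statements merged into one kernel-verified Lean document; each statement's English description precedes it below -/
import Mathlib

section
/- Let λ ∈ ℝ, z ∈ ℂ with z ≠ λ, and let (a,b) ⊆ ℝ be an interval. Let Φλ : (a,b) → ℝ², let c : (a,b) → ℝ with c(x) ≠ 0 for all x, and set Φ̃(x) = Φλ(x)/c(x). Let Θz, Φz : (a,b) → ℂ² satisfy W_x(Θz,Φz) = 1 for all x ∈ (a,b), let M ∈ ℂ, and set Ψz = Θz + M·Φz. Define Φ_∞(x) = (1/(z-λ))·(Φz(x) + (1/(z-λ))·Φ̃(x)·W_x(Φλ,Φz)), Θ_∞(x) = (z-λ)·Θz(x) + Φ̃(x)·W_x(Φλ,Θz), and Ψ_∞(x) = (z-λ)·Ψz(x) + Φ̃(x)·W_x(Φλ,Ψz). Then for all x ∈ (a,b): (i) W_x(Θ_∞,Φ_∞) = 1; (ii) Ψ_∞(x) = Θ_∞(x) + (z-λ)²·M·Φ_∞(x). (In other words, in the limiting case γ = ∞ the singular Weyl function of the commuted operator is M_∞(z) = (z-λ)²·M(z).) -/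
/-!
Writing `d = z - λ`, all three solutions of the commuted operator are images of the old ones
under the single linear map `T f = d • f + W(Φλ, f) • Φ̃`: `Θ_∞ = T Θz`, `Ψ_∞ = T Ψz` and
`Φ_∞ = d⁻² • T Φz`. Linearity of `T` gives `Ψ_∞ = Θ_∞ + d² M Φ_∞`. Since `Φ̃` is a multiple of
`Φλ`, `T` multiplies Wronskians by `d²`, because `W(Φλ, Φλ) = 0` and `W` is antisymmetric,
so that the two cross terms cancel; hence `W(Θ_∞, Φ_∞) = W(Θz, Φz) = 1`.
-/

open Set

noncomputable section

def Wr (f g : ℂ × ℂ) : ℂ := f.1 * g.2 - f.2 * g.1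

def toC (v : ℝ × ℝ) : ℂ × ℂ := ((v.1 : ℂ), (v.2 : ℂ))

theorem Wr_smul_right (m : ℂ) (f g : ℂ × ℂ) : Wr f (m • g) = m * Wr f g := by
  simp only [Wr, Prod.smul_fst, Prod.smul_snd, smul_eq_mul]
  ring

theorem Wr_add_right (f g h : ℂ × ℂ) : Wr f (g + h) = Wr f g + Wr f h := by
  simp only [Wr, Prod.fst_add, Prod.snd_add]
  ring

def commutationMap (d : ℂ) (φ w f : ℂ × ℂ) : ℂ × ℂ := d • f + Wr φ f • w

theorem commutationMap_add_smul (d m : ℂ) (φ w f g : ℂ × ℂ) :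
    commutationMap d φ w (f + m • g) = commutationMap d φ w f + m • commutationMap d φ w g := by
  simp only [commutationMap, Wr_add_right, Wr_smul_right]
  module

theorem Wr_commutationMap_smul (d s : ℂ) (φ f g : ℂ × ℂ) :
    Wr (commutationMap d φ (s • φ) f) (commutationMap d φ (s • φ) g) = d ^ 2 * Wr f g := by
  simp only [commutationMap, Wr, Prod.fst_add, Prod.snd_add, Prod.smul_fst, Prod.smul_snd,
    smul_eq_mul]
  ring

theorem inv_smul_add_inv_mul_smul {K V : Type*} [Field K] [AddCommGroup V] [Module K V]
    {d : K} (hd : d ≠ 0) (w f : V) (u : K) :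
    d⁻¹ • (f + (d⁻¹ * u) • w) = (d ^ 2)⁻¹ • (d • f + u • w) := by
  simp only [smul_add, smul_smul]
  congr 2 <;> field_simp

theorem double_commutation_gamma_infinity_general
    (a b lam : ℝ) (z : ℂ) (hz : z ≠ (lam : ℂ))
    (Φlam : ℝ → ℝ × ℝ)
    (c : ℝ → ℝ)
    (Φt : ℝ → ℂ × ℂ) (hΦt : ∀ x ∈ Ioo a b, Φt x = ((c x : ℂ))⁻¹ • toC (Φlam x))
    (Θz Φz Ψz : ℝ → ℂ × ℂ)
    (hW : ∀ x ∈ Ioo a b, Wr (Θz x) (Φz x) = 1)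
    (M : ℂ) (hΨ : ∀ x ∈ Ioo a b, Ψz x = Θz x + M • Φz x)
    (Φinf Θinf Ψinf : ℝ → ℂ × ℂ)
    (hΦinf : ∀ x ∈ Ioo a b,
      Φinf x = (z - (lam : ℂ))⁻¹ •
        (Φz x + ((z - (lam : ℂ))⁻¹ * Wr (toC (Φlam x)) (Φz x)) • Φt x))
    (hΘinf : ∀ x ∈ Ioo a b,
      Θinf x = (z - (lam : ℂ)) • Θz x + (Wr (toC (Φlam x)) (Θz x)) • Φt x)
    (hΨinf : ∀ x ∈ Ioo a b,
      Ψinf x = (z - (lam : ℂ)) • Ψz x + (Wr (toC (Φlam x)) (Ψz x)) • Φt x) :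
    (∀ x ∈ Ioo a b, Wr (Θinf x) (Φinf x) = 1) ∧
    (∀ x ∈ Ioo a b, Ψinf x = Θinf x + ((z - (lam : ℂ)) ^ 2 * M) • Φinf x) := by
  have hd : z - (lam : ℂ) ≠ 0 := sub_ne_zero.mpr hz
  have hΘ : ∀ x ∈ Ioo a b,
      Θinf x = commutationMap (z - lam) (toC (Φlam x)) (Φt x) (Θz x) := hΘinf
  have hΦ : ∀ x ∈ Ioo a b, Φinf x =
      ((z - lam) ^ 2)⁻¹ • commutationMap (z - lam) (toC (Φlam x)) (Φt x) (Φz x) := by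
    intro x hx
    rw [hΦinf x hx, inv_smul_add_inv_mul_smul hd]
    rfl
  refine ⟨fun x hx ↦ ?_, fun x hx ↦ ?_⟩
  · rw [hΘ x hx, hΦ x hx, hΦt x hx, Wr_smul_right, Wr_commutationMap_smul, hW x hx]
    field_simp
  · rw [hΨinf x hx, hΨ x hx, hΘ x hx, hΦ x hx, smul_smul, mul_comm _ M, mul_assoc,
      mul_inv_cancel₀ (pow_ne_zero 2 hd), mul_one]
    exact commutationMap_add_smul ..

/-- The limiting case `γ = ∞` of the double commutation method: with
`Φ_∞ = (z-λ)⁻¹(Φz + (z-λ)⁻¹ Φ̃ W(Φλ,Φz))`, `Θ_∞ = (z-λ)Θz + Φ̃ W(Φλ,Θz)` and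
`Ψ_∞ = (z-λ)Ψz + Φ̃ W(Φλ,Ψz)` for `Ψz = Θz + M Φz`, one has
`W(Θ_∞,Φ_∞) = 1` and `Ψ_∞ = Θ_∞ + (z-λ)² M Φ_∞`, i.e. `M_∞(z) = (z-λ)² M(z)`. -/
theorem double_commutation_gamma_infinity
    (a b lam : ℝ) (z : ℂ) (hz : z ≠ (lam : ℂ))
    (Φlam : ℝ → ℝ × ℝ)
    (c : ℝ → ℝ) (hc0 : ∀ x ∈ Ioo a b, c x ≠ 0)
    (Φt : ℝ → ℂ × ℂ) (hΦt : ∀ x ∈ Ioo a b, Φt x = ((c x : ℂ))⁻¹ • toC (Φlam x))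
    (Θz Φz Ψz : ℝ → ℂ × ℂ)
    (hW : ∀ x ∈ Ioo a b, Wr (Θz x) (Φz x) = 1)
    (M : ℂ) (hΨ : ∀ x ∈ Ioo a b, Ψz x = Θz x + M • Φz x)
    (Φinf Θinf Ψinf : ℝ → ℂ × ℂ)
    (hΦinf : ∀ x ∈ Ioo a b,
      Φinf x = (z - (lam : ℂ))⁻¹ •
        (Φz x + ((z - (lam : ℂ))⁻¹ * Wr (toC (Φlam x)) (Φz x)) • Φt x))
    (hΘinf : ∀ x ∈ Ioo a b,
      Θinf x = (z - (lam : ℂ)) • Θz x + (Wr (toC (Φlam x)) (Θz x)) • Φt x)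
    (hΨinf : ∀ x ∈ Ioo a b,
      Ψinf x = (z - (lam : ℂ)) • Ψz x + (Wr (toC (Φlam x)) (Ψz x)) • Φt x) :
    (∀ x ∈ Ioo a b, Wr (Θinf x) (Φinf x) = 1) ∧
    (∀ x ∈ Ioo a b, Ψinf x = Θinf x + ((z - (lam : ℂ)) ^ 2 * M) • Φinf x) :=
  double_commutation_gamma_infinity_general a b lam z hz Φlam c Φt hΦt Θz Φz Ψz hW M hΨ Φinf Θinf
    Ψinf hΦinf hΘinf hΨinf
end
end

section
/- Let (a,b) ⊆ ℝ and Q : (a,b) → Matrix(2,2,ℂ) with real entries and Q₁₂ = Q₂₁. Let λ ∈ ℝ and let u₋ : (a,b) → ℝ² be a differentiable real solution of (1/i)σ₂u₋' + Qu₋ = λu₋, let c : (a,b) → ℝ be differentiable with c(x) ≠ 0 and c'(x) = u₋(x)^⊤u₋(x) for all x, and set u_γ = u₋/c and Q_γ(x) = ((u₋₁(x)² − u₋₂(x)²)/c(x))·σ₁ − (2u₋₁(x)u₋₂(x)/c(x))·σ₃. Then u_γ is differentiable on (a,b) and satisfies (1/i)σ₂u_γ'(x) + (Q(x) + Q_γ(x))u_γ(x)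 = λu_γ(x) for all x ∈ (a,b). -/
open Set

noncomputable section

/-- The Pauli matrix `σ₁` (as a complex matrix). -/
def sig1C : Matrix (Fin 2) (Fin 2) ℂ := !![0, 1; 1, 0]

/-- The Pauli matrix `σ₂` (as a complex matrix). -/
def sig2C : Matrix (Fin 2) (Fin 2) ℂ := !![0, -Complex.I; Complex.I, 0]

/-- The Pauli matrix `σ₃` (as a complex matrix). -/
def sig3C : Matrix (Fin 2) (Fin 2) ℂ := !![1, 0; 0, -1]

/-! `I⁻¹σ₂` is the rotation `J = [[0,-1],[1,0]]`, and `Q_γ = c⁻¹ P(u₋)` with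
`P(v) = (v₀² - v₁²) σ₁ - 2 v₀ v₁ σ₃`, which satisfies `P(v) v = |v|² J v`.
Differentiating `u_γ = c⁻¹ u₋` with `c' = |u₋|²` produces the extra term
`-c⁻² |u₋|² J u₋` in `J u_γ'`, and this is exactly cancelled by `Q_γ u_γ = c⁻² P(u₋) u₋`. -/

open Matrix

theorem inv_smul_solves_commuted_equation {n K : Type*} [Fintype n] [Field K]
    (A Q P : Matrix n n K) (v v' : n → K) (lam c s : K)
    (hv : A *ᵥ v' + Q *ᵥ v = lam • v) (hP : P *ᵥ v = s • A *ᵥ v) :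
    A *ᵥ (c⁻¹ • v' + (-s / c ^ 2) • v) + (Q + c⁻¹ • P) *ᵥ (c⁻¹ • v) = lam • c⁻¹ • v := by
  simp only [mulVec_add, add_mulVec, mulVec_smul, smul_mulVec, hP]
  linear_combination (norm := module) c⁻¹ • hv

def commutationPotential (v : Fin 2 → ℂ) : Matrix (Fin 2) (Fin 2) ℂ :=
  (v 0 ^ 2 - v 1 ^ 2) • sig1C - (2 * v 0 * v 1) • sig3C

theorem commutationPotential_mulVec_self (v : Fin 2 → ℂ) :
    commutationPotential v *ᵥ v = (v 0 ^ 2 + v 1 ^ 2) • (Complex.I⁻¹ • sig2C) *ᵥ v := by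
  ext i
  fin_cases i <;>
    simp [commutationPotential, sig1C, sig2C, sig3C, mulVec, dotProduct, Fin.sum_univ_two] <;>
    ring

theorem double_commutation_ugamma_solution_general
    (a b lam : ℝ)
    (Q : ℝ → Matrix (Fin 2) (Fin 2) ℂ)
    (um um' : ℝ → Fin 2 → ℝ)
    (hum : ∀ x ∈ Ioo a b,
      HasDerivAt (fun t => (fun i => ((um t i : ℝ) : ℂ)))
        (fun i => ((um' x i : ℝ) : ℂ)) x)
    (humeq : ∀ x ∈ Ioo a b,
      Complex.I⁻¹ • (sig2C.mulVec (fun i => ((um' x i : ℝ) : ℂ)))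
        + (Q x).mulVec (fun i => ((um x i : ℝ) : ℂ))
        = (lam : ℂ) • (fun i => ((um x i : ℝ) : ℂ)))
    (c : ℝ → ℝ) (hc0 : ∀ x ∈ Ioo a b, c x ≠ 0)
    (hc' : ∀ x ∈ Ioo a b, HasDerivAt c (um x 0 ^ 2 + um x 1 ^ 2) x)
    (Qγ : ℝ → Matrix (Fin 2) (Fin 2) ℂ)
    (hQγ : ∀ x ∈ Ioo a b,
      Qγ x = (((um x 0 ^ 2 - um x 1 ^ 2) / c x : ℝ) : ℂ) • sig1C
        - (((2 * um x 0 * um x 1) / c x : ℝ) : ℂ) • sig3C)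
    (uγ : ℝ → Fin 2 → ℂ)
    (huγ : ∀ x, uγ x = fun i => ((um x i / c x : ℝ) : ℂ)) :
    ∀ x ∈ Ioo a b, ∃ ud : Fin 2 → ℂ, HasDerivAt uγ ud x ∧
      Complex.I⁻¹ • (sig2C.mulVec ud) + (Q x + Qγ x).mulVec (uγ x)
        = (lam : ℂ) • uγ x := by
  intro x hx
  set v : ℝ → Fin 2 → ℂ := fun t i => (um t i : ℂ)
  have huγ_eq : uγ = fun t => (c t : ℂ)⁻¹ • v t := by
    funext t i
    simp [huγ, v, div_eq_inv_mul]
  have hQγ_eq : Qγ x = (c x : ℂ)⁻¹ • commutationPotential (v x) := by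
    rw [hQγ x hx, commutationPotential, smul_sub, smul_smul, smul_smul]
    push_cast [v]
    ring_nf
  have hcx : (c x : ℂ) ≠ 0 := by exact_mod_cast hc0 x hx
  refine ⟨_, huγ_eq ▸ ((hc' x hx).ofReal_comp.fun_inv hcx).fun_smul (hum x hx), ?_⟩
  rw [hQγ_eq, huγ_eq, ← smul_mulVec]
  refine inv_smul_solves_commuted_equation _ _ _ _ _ _ _ _ ?_ ?_
  · simpa only [smul_mulVec] using humeq x hx
  · push_cast
    exact commutationPotential_mulVec_self (v x)

/-- The generating function of the boundary conditions of the doubly commuted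
operator: if `u₋` is a real solution of `τu = λu`, `c' = u₋^⊤u₋` and `c ≠ 0`,
then `u_γ = u₋/c` solves the commuted equation `τ_γu = λu` with
`τ_γ = τ + Q_γ`. -/
theorem double_commutation_ugamma_solution
    (a b lam : ℝ)
    (Q : ℝ → Matrix (Fin 2) (Fin 2) ℂ)
    (hQreal : ∀ x ∈ Ioo a b, ∀ i j, (Q x i j).im = 0)
    (hQsym : ∀ x ∈ Ioo a b, Q x 0 1 = Q x 1 0)
    (um um' : ℝ → Fin 2 → ℝ)
    (hum : ∀ x ∈ Ioo a b,
      HasDerivAt (fun t => (fun i => ((um t i : ℝ) : ℂ)))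
        (fun i => ((um' x i : ℝ) : ℂ)) x)
    (humeq : ∀ x ∈ Ioo a b,
      Complex.I⁻¹ • (sig2C.mulVec (fun i => ((um' x i : ℝ) : ℂ)))
        + (Q x).mulVec (fun i => ((um x i : ℝ) : ℂ))
        = (lam : ℂ) • (fun i => ((um x i : ℝ) : ℂ)))
    (c : ℝ → ℝ) (hc0 : ∀ x ∈ Ioo a b, c x ≠ 0)
    (hc' : ∀ x ∈ Ioo a b, HasDerivAt c (um x 0 ^ 2 + um x 1 ^ 2) x)
    (Qγ : ℝ → Matrix (Fin 2) (Fin 2) ℂ)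
    (hQγ : ∀ x ∈ Ioo a b,
      Qγ x = (((um x 0 ^ 2 - um x 1 ^ 2) / c x : ℝ) : ℂ) • sig1C
        - (((2 * um x 0 * um x 1) / c x : ℝ) : ℂ) • sig3C)
    (uγ : ℝ → Fin 2 → ℂ)
    (huγ : ∀ x, uγ x = fun i => ((um x i / c x : ℝ) : ℂ)) :
    ∀ x ∈ Ioo a b, ∃ ud : Fin 2 → ℂ, HasDerivAt uγ ud x ∧
      Complex.I⁻¹ • (sig2C.mulVec ud) + (Q x + Qγ x).mulVec (uγ x)
        = (lam : ℂ) • uγ x :=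
  double_commutation_ugamma_solution_general a b lam Q um um' hum humeq c hc0 hc' Qγ hQγ uγ huγ
end
end
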